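/- Let G be a connected graph with adjacency matrix A, eigenvalues λ₁ ≥ ⋯ ≥ λₙ, and normalized Perron eigenvector ν. Let p be a real polynomial of degree at most k, Λ(p) = max_{2≤i≤n} p(λ_i) and λ(p) = min_{2≤i≤n} p(λ_i). For S ⊆ V define P(S,S) = Σ_{i,j∈S} p(A)_{ij}. Then −Λ(p)(|S| − ⟨χ_S,ν⟩²) ≤ p(λ₁)⟨χ_S,ν⟩² − P(S,S) ≤ −λ(p)(|S| − ⟨χ_S,ν⟩²). -/

import Mathlib

open Matrix Finset Polynomial

/-!
Write `χ_S = ⟨χ_S, ν⟩ ν + g` with `g ⟂ ν`. Since `p(A) ν = p(λ₁) ν` and `p(A)` is symmetric,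
`P(S,S) - p(λ₁)⟨χ_S, ν⟩² = gᵀ p(A) g` and `|S| - ⟨χ_S, ν⟩² = gᵀ g`. Expanding `g` in an orthonormal
eigenbasis `(u_i)` of `A` gives `gᵀ p(A) g = ∑ p(μ_i) ⟨g, u_i⟩²`, so it suffices that every
eigenvalue `μ_i` with `⟨g, u_i⟩ ≠ 0` is one of `λ₂, …, λₙ`. This is clear unless `μ_i` is the copy
of `λ₁` in the list; then `λ₁` must be repeated, for if it were simple, `ν` would be a multiple of
`u_i` and `g ⟂ ν` would force `⟨g, u_i⟩ = 0`.
-/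

section

variable {ι R : Type*} [Fintype ι]

theorem sub_smul_dotProduct_eq_zero [CommRing R] {v : ι → R} (hvv : v ⬝ᵥ v = 1) (x : ι → R) :
    (x - (x ⬝ᵥ v) • v) ⬝ᵥ v = 0 := by
  rw [sub_dotProduct, smul_dotProduct, hvv, smul_eq_mul, mul_one, sub_self]

theorem sub_smul_dotProduct_sub_smul [CommRing R] {v : ι → R} (hvv : v ⬝ᵥ v = 1) (x : ι → R) :
    (x - (x ⬝ᵥ v) • v) ⬝ᵥ (x - (x ⬝ᵥ v) • v) = x ⬝ᵥ x - (x ⬝ᵥ v) ^ 2 := by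
  simp only [sub_dotProduct, dotProduct_sub, smul_dotProduct, dotProduct_smul, hvv, smul_eq_mul,
    dotProduct_comm v x]
  ring

theorem Finset.indicator_one_dotProduct (S : Finset ι) (w : ι → ℝ) :
    (S : Set ι).indicator 1 ⬝ᵥ w = ∑ i ∈ S, w i := by
  classical
  simp [dotProduct, Set.indicator_apply, Finset.sum_ite_mem]

namespace Matrix

theorem IsSymm.dotProduct_mulVec_comm [CommSemiring R] {M : Matrix ι ι R} (hM : M.IsSymm)
    (x y : ι → R) : x ⬝ᵥ (M *ᵥ y) = (M *ᵥ x) ⬝ᵥ y := by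
  rw [dotProduct_mulVec, ← mulVec_transpose, hM]

theorem IsSymm.dotProduct_mulVec_sub_smul [CommRing R] {M : Matrix ι ι R} (hM : M.IsSymm)
    {v : ι → R} {s : R} (hv : M *ᵥ v = s • v) (hvv : v ⬝ᵥ v = 1) (x : ι → R) :
    (x - (x ⬝ᵥ v) • v) ⬝ᵥ (M *ᵥ (x - (x ⬝ᵥ v) • v)) = x ⬝ᵥ (M *ᵥ x) - s * (x ⬝ᵥ v) ^ 2 := by
  have hvx : v ⬝ᵥ (M *ᵥ x) = s * (x ⬝ᵥ v) := by
    rw [hM.dotProduct_mulVec_comm, hv, smul_dotProduct, smul_eq_mul, dotProduct_comm]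
  simp only [mulVec_sub, mulVec_smul, hv, sub_dotProduct, dotProduct_sub, smul_dotProduct,
    dotProduct_smul, hvx, hvv, smul_eq_mul]
  ring

variable [DecidableEq ι]

theorem aeval_mulVec_of_mulVec_eq_smul [CommRing R] {A : Matrix ι ι R} {v : ι → R} {t : R}
    (h : A *ᵥ v = t • v) (p : R[X]) : aeval A p *ᵥ v = p.eval t • v := by
  rw [← toLinAlgEquiv'_apply, ← aeval_algHom_apply]
  exact Module.End.aeval_apply_of_mem_apply_eq_smul (by rwa [toLinAlgEquiv'_apply])

theorem IsSymm.aeval [CommSemiring R] {A : Matrix ι ι R} (hA : A.IsSymm) (p : R[X]) :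
    (aeval A p).IsSymm := by
  induction p using Polynomial.induction_on' with
  | add p q hp hq => simpa using hp.add hq
  | monomial k a => simpa [Polynomial.aeval_monomial, Algebra.smul_def] using ((hA.pow k).smul a)

namespace IsHermitian

variable {A : Matrix ι ι ℝ} (hA : A.IsHermitian)

theorem dotProduct_eq_sum_eigenvectorBasis (x y : ι → ℝ) :
    x ⬝ᵥ y = ∑ i, (x ⬝ᵥ hA.eigenvectorBasis i) * (hA.eigenvectorBasis i ⬝ᵥ y) := by
  simpa [EuclideanSpace.inner_eq_star_dotProduct, dotProduct_comm, mul_comm] using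
    (hA.eigenvectorBasis.sum_inner_mul_inner (WithLp.toLp 2 x) (WithLp.toLp 2 y)).symm

theorem dotProduct_aeval_mulVec_eq_sum (p : ℝ[X]) (x : ι → ℝ) :
    x ⬝ᵥ (aeval A p *ᵥ x) = ∑ i, p.eval (hA.eigenvalues i) * (x ⬝ᵥ hA.eigenvectorBasis i) ^ 2 := by
  have hsymm : (aeval A p).IsSymm := (isHermitian_iff_isSymm.mp hA).aeval p
  rw [hA.dotProduct_eq_sum_eigenvectorBasis]
  refine Finset.sum_congr rfl fun i _ => ?_
  rw [hsymm.dotProduct_mulVec_comm, aeval_mulVec_of_mulVec_eq_smul (hA.mulVec_eigenvectorBasis i),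
    smul_dotProduct, smul_eq_mul, dotProduct_comm _ x]
  ring

theorem dotProduct_self_eq_sum_sq (x : ι → ℝ) :
    x ⬝ᵥ x = ∑ i, (x ⬝ᵥ hA.eigenvectorBasis i) ^ 2 := by
  simpa using hA.dotProduct_aeval_mulVec_eq_sum 1 x

theorem dotProduct_aeval_mulVec_mem_Icc {p : ℝ[X]} {x : ι → ℝ} {a b : ℝ}
    (h : ∀ i, x ⬝ᵥ hA.eigenvectorBasis i ≠ 0 → p.eval (hA.eigenvalues i) ∈ Set.Icc a b) :
    x ⬝ᵥ (aeval A p *ᵥ x) ∈ Set.Icc (a * (x ⬝ᵥ x)) (b * (x ⬝ᵥ x)) := by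
  rw [hA.dotProduct_aeval_mulVec_eq_sum, hA.dotProduct_self_eq_sum_sq, Finset.mul_sum, Finset.mul_sum]
  have termwise : ∀ i, p.eval (hA.eigenvalues i) * (x ⬝ᵥ hA.eigenvectorBasis i) ^ 2 ∈
      Set.Icc (a * (x ⬝ᵥ hA.eigenvectorBasis i) ^ 2) (b * (x ⬝ᵥ hA.eigenvectorBasis i) ^ 2) := by
    intro i
    by_cases hi : x ⬝ᵥ hA.eigenvectorBasis i = 0
    · simp [hi]
    · have := h i hi
      exact ⟨by gcongr; exact this.1, by gcongr; exact this.2⟩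
  exact ⟨Finset.sum_le_sum fun i _ => (termwise i).1, Finset.sum_le_sum fun i _ => (termwise i).2⟩

theorem dotProduct_eigenvectorBasis_eq_zero_of_ne {v : ι → ℝ} {t : ℝ} (hv : A *ᵥ v = t • v)
    {i : ι} (hi : hA.eigenvalues i ≠ t) : v ⬝ᵥ hA.eigenvectorBasis i = 0 := by
  have hsymm : A.IsSymm := isHermitian_iff_isSymm.mp hA
  have h : t * (v ⬝ᵥ hA.eigenvectorBasis i) = hA.eigenvalues i * (v ⬝ᵥ hA.eigenvectorBasis i) := by
    rw [← smul_eq_mul, ← smul_dotProduct, ← hv, ← hsymm.dotProduct_mulVec_comm,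
      hA.mulVec_eigenvectorBasis, dotProduct_smul, smul_eq_mul]
  by_contra hvi
  exact hi (mul_right_cancel₀ hvi h).symm

theorem exists_ne_eigenvalues_eq {v x : ι → ℝ} {t : ℝ} (hv : A *ᵥ v = t • v) (hv0 : v ≠ 0)
    (hxv : x ⬝ᵥ v = 0) {i : ι} (hxi : x ⬝ᵥ hA.eigenvectorBasis i ≠ 0) :
    ∃ j ≠ i, hA.eigenvalues j = t := by
  by_contra! hne
  have hvj : ∀ j ≠ i, v ⬝ᵥ hA.eigenvectorBasis j = 0 := fun j hj =>
    hA.dotProduct_eigenvectorBasis_eq_zero_of_ne hv (hne j hj)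
  have hvi : v ⬝ᵥ hA.eigenvectorBasis i = 0 := by
    have hx : x ⬝ᵥ v = (x ⬝ᵥ hA.eigenvectorBasis i) * (v ⬝ᵥ hA.eigenvectorBasis i) := by
      rw [hA.dotProduct_eq_sum_eigenvectorBasis, Finset.sum_eq_single i
        (fun j _ hj => by rw [dotProduct_comm _ v, hvj j hj, mul_zero]) (by simp), dotProduct_comm _ v]
    exact (mul_eq_zero.mp (hx ▸ hxv)).resolve_left hxi
  refine hv0 (dotProduct_self_eq_zero.mp ?_)
  rw [hA.dotProduct_self_eq_sum_sq]
  refine Finset.sum_eq_zero fun j _ => ?_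
  rcases eq_or_ne j i with rfl | hj
  · simp [hvi]
  · simp [hvj j hj]

theorem exists_ne_eq_eigenvalues_of_dotProduct_ne_zero {lam : ι → ℝ} {e : ι ≃ ι}
    (he : ∀ i, lam i = hA.eigenvalues (e i)) {v x : ι → ℝ} {z : ι} (hv : A *ᵥ v = lam z • v)
    (hv0 : v ≠ 0) (hxv : x ⬝ᵥ v = 0) {i : ι} (hxi : x ⬝ᵥ hA.eigenvectorBasis i ≠ 0) :
    ∃ j ≠ z, lam j = hA.eigenvalues i := by
  by_cases hiz : e.symm i = z
  · obtain ⟨j, hji, hj⟩ := hA.exists_ne_eigenvalues_eq hv hv0 hxv hxi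
    refine ⟨e.symm j, fun hjz => hji (e.symm.injective (hjz.trans hiz.symm)), ?_⟩
    rw [he, e.apply_symm_apply, hj, ← hiz, he, e.apply_symm_apply]
  · exact ⟨e.symm i, hiz, by rw [he, e.apply_symm_apply]⟩

end IsHermitian

end Matrix

end

/-- **Polynomial Expander Mixing Lemma, diagonal case** (Theorem 21(i) of the paper):
`−Λ(p)(|S| − ⟨χ_S,ν⟩²) ≤ p(λ₁)⟨χ_S,ν⟩² − P(S,S) ≤ −λ(p)(|S| − ⟨χ_S,ν⟩²)`. -/
theorem poly_eml_diagonal {n : ℕ} (hn : 2 ≤ n)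
    (A : Matrix (Fin n) (Fin n) ℝ)
    (hAH : A.IsHermitian)
    (lam : Fin n → ℝ)
    (heig : ∃ e : Fin n ≃ Fin n, ∀ i, lam i = hAH.eigenvalues (e i))
    (ν : Fin n → ℝ) (hνnorm : ∑ i, ν i ^ 2 = 1)
    (hνeig : A *ᵥ ν = lam ⟨0, by omega⟩ • ν)
    (p : Polynomial ℝ)
    (Lambda lamP : ℝ)
    (hLambda : IsGreatest {z | ∃ i : Fin n, i ≠ ⟨0, by omega⟩ ∧ z = p.eval (lam i)} Lambda)
    (hlamP : IsLeast {z | ∃ i : Fin n, i ≠ ⟨0, by omega⟩ ∧ z = p.eval (lam i)} lamP)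
    (S : Finset (Fin n)) :
    -Lambda * ((S.card : ℝ) - (∑ i ∈ S, ν i) ^ 2)
      ≤ p.eval (lam ⟨0, by omega⟩) * (∑ i ∈ S, ν i) ^ 2
          - ∑ i ∈ S, ∑ j ∈ S, (Polynomial.aeval A p) i j ∧
    p.eval (lam ⟨0, by omega⟩) * (∑ i ∈ S, ν i) ^ 2
        - ∑ i ∈ S, ∑ j ∈ S, (Polynomial.aeval A p) i j
      ≤ -lamP * ((S.card : ℝ) - (∑ i ∈ S, ν i) ^ 2) := by
  obtain ⟨e, he⟩ := heig
  set χ : Fin n → ℝ := (S : Set (Fin n)).indicator 1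
  have hνν : ν ⬝ᵥ ν = 1 := by simpa [dotProduct, sq] using hνnorm
  have hν0 : ν ≠ 0 := by rintro rfl; simp at hνν
  have hspec : ∀ i, (χ - (χ ⬝ᵥ ν) • ν) ⬝ᵥ hAH.eigenvectorBasis i ≠ 0 →
      p.eval (hAH.eigenvalues i) ∈ Set.Icc lamP Lambda := by
    intro i hi
    obtain ⟨j, hjz, hj⟩ := hAH.exists_ne_eq_eigenvalues_of_dotProduct_ne_zero he hνeig hν0
      (sub_smul_dotProduct_eq_zero hνν χ) hi
    exact ⟨hlamP.2 ⟨j, hjz, by rw [hj]⟩, hLambda.2 ⟨j, hjz, by rw [hj]⟩⟩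
  have hbounds := hAH.dotProduct_aeval_mulVec_mem_Icc hspec
  have hAsymm : A.IsSymm := isHermitian_iff_isSymm.mp hAH
  have hχχ : χ ⬝ᵥ χ = S.card := by simp [χ, S.indicator_one_dotProduct, Set.indicator_apply]
  have hχB : χ ⬝ᵥ (aeval A p *ᵥ χ) = ∑ i ∈ S, ∑ j ∈ S, aeval A p i j := by
    simp [χ, S.indicator_one_dotProduct, dotProduct_comm _ χ, mulVec]
  rw [(hAsymm.aeval p).dotProduct_mulVec_sub_smul (aeval_mulVec_of_mulVec_eq_smul hνeig p) hνν,
    sub_smul_dotProduct_sub_smul hνν, hχχ, hχB, S.indicator_one_dotProduct] at hbounds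
  constructor <;> linarith [hbounds.1, hbounds.2]
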